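/- arXiv:1310.1312 — 3 statements merged into one kernel-verified Lean document; each statement's English description precedes it below -/
import Mathlib

section
/- For every n ≥ 1, −n ∫_{Δ_n} x_1 ln x_1 dx = C_n, where x_1 denotes the first coordinate on the simplex. Equivalently, the subentropy of the point-mass probability vector (1, 0, …, 0) is zero: F(1,0,…,0) = 0. -/
open MeasureTheory Matrix
open scoped ComplexOrder

/-- η(y) = −y ln y (with ln 0 = 0 in Mathlib, so 0 ln 0 = 0). -/
noncomputable def eta (y : ℝ) : ℝ := -(y * Real.log y)

/-- C_n = 1/2 + 1/3 + ⋯ + 1/n (C_1 = 0). -/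
noncomputable def harmC (n : ℕ) : ℝ := ∑ k ∈ Finset.Icc 2 n, (1 : ℝ) / k

/-- Integral of a function over the probability simplex Δ_n with respect to the
normalized uniform measure dx = (n−1)! dx_1 ⋯ dx_{n−1}, realised in the coordinates
(x_1, …, x_{n−1}), with x_n = 1 − (x_1 + ⋯ + x_{n−1}). -/
noncomputable def simplexIntegral (n : ℕ) (f : (Fin n → ℝ) → ℝ) : ℝ :=
  ((n - 1).factorial : ℝ) *
    ∫ y in {y : Fin (n - 1) → ℝ | (∀ i, 0 ≤ y i) ∧ ∑ i, y i ≤ 1},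
      f (fun i => if h : (i : ℕ) < n - 1 then y ⟨(i : ℕ), h⟩ else 1 - ∑ j, y j)

/-- Subentropy of a probability vector: F(λ) = n ∫_{Δ_n} η(λ·x) dx − C_n. -/
noncomputable def subF (n : ℕ) (lam : Fin n → ℝ) : ℝ :=
  (n : ℝ) * simplexIntegral n (fun x => eta (∑ i, lam i * x i)) - harmC n

/-- Subentropy of a (Hermitian) matrix: Q(ρ) = F(λ(ρ)), the subentropy of its
eigenvalue vector (junk value 0 for non-Hermitian matrices). -/
noncomputable def Qmat {ι : Type} [Fintype ι] [DecidableEq ι] (ρ : Matrix ι ι ℂ) : ℝ :=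
  if h : ρ.IsHermitian then
    subF (Fintype.card ι) (fun k => h.eigenvalues ((Fintype.equivFin ι).symm k))
  else 0

/-! Slicing the solid simplex `{y ≥ 0, ∑ y ≤ 1} ⊆ ℝ^(n-1)` at first coordinate `t` leaves a solid
simplex of volume `(1 - t)^(n-2) / (n-2)!`. Since `-t (1 - t)^k = (1 - t)^(k+1) - (1 - t)^k`,
everything reduces to `∫₀¹ (1 - t)^m log t dt = -H_(m+1) / (m+1)`. That is an integration by
parts against the antiderivative `(1 - (1 - t)^(m+1)) / (m+1)` of `(1 - t)^m`: it is `t` times a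
geometric sum in `1 - t`, which tames the singularity of `log` at `0` and integrates to
`H_(m+1) / (m+1)`. -/

open scoped ENNReal
open Real Set

theorem integral_mul_log_eq_neg_integral_of_hasDerivAt {P q : ℝ → ℝ} (hP : Continuous P)
    (hq : Continuous q) (hderiv : ∀ t, HasDerivAt (fun t => t * P t) (q t) t) :
    ∫ t in (0 : ℝ)..1, q t * log t = -∫ t in (0 : ℝ)..1, P t := by
  have hF : ∀ t ∈ Ioo (0 : ℝ) 1,
      HasDerivAt (fun t => t * P t * log t) (q t * log t + P t) t := by
    intro t ht
    have h := (hderiv t).mul (hasDerivAt_log ht.1.ne')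
    rwa [mul_comm t, mul_assoc, mul_inv_cancel₀ ht.1.ne', mul_one] at h
  have hcont : Continuous fun t => t * P t * log t :=
    (hP.mul continuous_mul_log).congr fun t => by simp only [Pi.mul_apply]; ring
  have hqlog : IntervalIntegrable (fun t => q t * log t) volume 0 1 :=
    intervalIntegral.intervalIntegrable_log'.continuousOn_mul hq.continuousOn
  have hFTC := intervalIntegral.integral_eq_sub_of_hasDerivAt_of_le zero_le_one
    hcont.continuousOn hF (hqlog.add (hP.intervalIntegrable 0 1))
  rw [intervalIntegral.integral_add hqlog (hP.intervalIntegrable 0 1)] at hFTC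
  simp only [log_one, mul_zero, zero_mul, sub_zero] at hFTC
  linarith

theorem integral_one_sub_pow (j : ℕ) : ∫ t in (0 : ℝ)..1, (1 - t) ^ j = 1 / (j + 1) := by
  simp [intervalIntegral.integral_comp_sub_left fun u => u ^ j]

theorem integral_geom_sum_one_sub (m : ℕ) :
    ∫ t in (0 : ℝ)..1, ∑ j ∈ Finset.range m, (1 - t) ^ j = harmonic m := by
  rw [intervalIntegral.integral_finsetSum fun j _ =>
    (by fun_prop : Continuous fun t : ℝ => (1 - t) ^ j).intervalIntegrable 0 1]
  simp [integral_one_sub_pow, harmonic]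

theorem integral_one_sub_pow_mul_log (m : ℕ) :
    ∫ t in (0 : ℝ)..1, (1 - t) ^ m * log t = -(harmonic (m + 1) : ℝ) / (m + 1) := by
  set P : ℝ → ℝ := fun t => (∑ j ∈ Finset.range (m + 1), (1 - t) ^ j) / (m + 1)
  have htP : ∀ t, t * P t = (1 - (1 - t) ^ (m + 1)) / (m + 1) := fun t => by
    rw [← geom_sum_mul_neg]; simp only [P]; ring
  have hderiv : ∀ t, HasDerivAt (fun t => t * P t) ((1 - t) ^ m) t := fun t => by
    simp_rw [htP]
    refine ((((hasDerivAt_id t).const_sub 1).pow (m + 1)).const_sub 1 |>.div_const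
      ((m : ℝ) + 1)).congr_deriv ?_
    push_cast
    field_simp
    simp
  rw [integral_mul_log_eq_neg_integral_of_hasDerivAt (by fun_prop) (by fun_prop) hderiv,
    intervalIntegral.integral_div, integral_geom_sum_one_sub, neg_div]

theorem integral_negMulLog_mul_one_sub_pow (k : ℕ) :
    ∫ t in (0 : ℝ)..1, negMulLog t * (1 - t) ^ k =
      harmonic (k + 1) / (k + 1) - harmonic (k + 2) / (k + 2) := by
  have h : ∀ t : ℝ, negMulLog t * (1 - t) ^ k = (1 - t) ^ (k + 1) * log t - (1 - t) ^ k * log t :=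
    fun t => by simp only [negMulLog]; ring
  have hint : ∀ m, IntervalIntegrable (fun t : ℝ => (1 - t) ^ m * log t) volume 0 1 := fun m =>
    intervalIntegral.intervalIntegrable_log'.continuousOn_mul (by fun_prop)
  simp_rw [h]
  rw [intervalIntegral.integral_sub (hint _) (hint _), integral_one_sub_pow_mul_log,
    integral_one_sub_pow_mul_log]
  push_cast
  ring

theorem harmC_eq_harmonic_sub_one {n : ℕ} (hn : 1 ≤ n) : harmC n = harmonic n - 1 := by
  rw [harmC, harmonic_eq_sum_Icc, ← Finset.insert_Icc_add_one_left_eq_Icc hn,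
    Finset.sum_insert (by simp)]
  push_cast
  simp

def solidSimplex (k : ℕ) (r : ℝ) : Set (Fin k → ℝ) := {y | (∀ i, 0 ≤ y i) ∧ ∑ i, y i ≤ r}

theorem isClosed_solidSimplex (k : ℕ) (r : ℝ) : IsClosed (solidSimplex k r) := by
  simp only [solidSimplex, ofPred_and, ofPred_forall]
  exact (isClosed_iInter fun i => isClosed_le continuous_const (continuous_apply i)).inter
    (isClosed_le (continuous_finsetSum _ fun i _ => continuous_apply i) continuous_const)

theorem measurableSet_solidSimplex (k : ℕ) (r : ℝ) : MeasurableSet (solidSimplex k r) :=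
  (isClosed_solidSimplex k r).measurableSet

theorem solidSimplex_eq_empty {k : ℕ} {r : ℝ} (hr : r < 0) : solidSimplex k r = ∅ :=
  eq_empty_of_forall_notMem fun _ hy =>
    hr.not_ge ((Finset.sum_nonneg fun i _ => hy.1 i).trans hy.2)

theorem mem_Icc_of_mem_solidSimplex {k : ℕ} {r : ℝ} {y : Fin k → ℝ} (hy : y ∈ solidSimplex k r)
    (i : Fin k) : y i ∈ Icc 0 r :=
  ⟨hy.1 i, (Finset.single_le_sum (fun j _ => hy.1 j) (Finset.mem_univ i)).trans hy.2⟩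

theorem cons_mem_solidSimplex_succ {k : ℕ} {r t : ℝ} {z : Fin k → ℝ} :
    Fin.cons t z ∈ solidSimplex (k + 1) r ↔ 0 ≤ t ∧ z ∈ solidSimplex k (r - t) := by
  simp only [solidSimplex, mem_ofPred_eq, Fin.forall_fin_succ, Fin.cons_zero, Fin.cons_succ,
    Fin.sum_cons, le_sub_iff_add_le', and_assoc]

theorem lintegral_solidSimplex_succ (k : ℕ) (r : ℝ) {G : ℝ → ℝ≥0∞} (hG : Measurable G) :
    ∫⁻ y in solidSimplex (k + 1) r, G (y 0) =
      ∫⁻ t in Icc 0 r, G t * volume (solidSimplex k (r - t)) := by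
  have he : ∀ p, (MeasurableEquiv.piFinSuccAbove (fun _ : Fin (k + 1) => ℝ) 0).symm p =
      Fin.cons p.1 p.2 := fun p => by
    simp [MeasurableEquiv.piFinSuccAbove_symm_apply, Fin.insertNthEquiv, Fin.insertNth_zero']
  have hcons : Measurable fun p : ℝ × (Fin k → ℝ) => (Fin.cons p.1 p.2 : Fin (k + 1) → ℝ) := by
    simp_rw [← he]; exact MeasurableEquiv.measurable _
  have hmeas : Measurable ((solidSimplex (k + 1) r).indicator fun y => G (y 0)) :=
    (hG.comp (measurable_pi_apply 0)).indicator (measurableSet_solidSimplex _ _)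
  have hslice : ∀ t z, (solidSimplex (k + 1) r).indicator (fun y => G (y 0)) (Fin.cons t z) =
      (solidSimplex k (r - t)).indicator (fun _ => (Icc 0 r).indicator G t) z := fun t z => by
    rcases lt_or_ge r t with hrt | hrt
    · simp [indicator_apply, cons_mem_solidSimplex_succ, solidSimplex_eq_empty (sub_neg.2 hrt)]
    · by_cases ht : 0 ≤ t <;> by_cases hz : z ∈ solidSimplex k (r - t) <;>
        simp [cons_mem_solidSimplex_succ, ht, hz, hrt]
  rw [← lintegral_indicator (measurableSet_solidSimplex _ _),
    ← (volume_preserving_piFinSuccAbove (fun _ : Fin (k + 1) => ℝ) 0).symm.lintegral_comp hmeas,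
    Measure.volume_eq_prod]
  simp_rw [he]
  have hm : Measurable fun p : ℝ × (Fin k → ℝ) =>
      (solidSimplex (k + 1) r).indicator (fun y => G (y 0)) (Fin.cons p.1 p.2) :=
    hmeas.comp hcons
  rw [lintegral_prod _ hm.aemeasurable, ← lintegral_indicator measurableSet_Icc]
  refine lintegral_congr fun t => ?_
  simp only [hslice]
  rw [lintegral_indicator_const (measurableSet_solidSimplex _ _), indicator_mul_left]

theorem volume_solidSimplex (k : ℕ) {r : ℝ} (hr : 0 ≤ r) :
    volume (solidSimplex k r) = ENNReal.ofReal (r ^ k / k.factorial) := by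
  induction k generalizing r with
  | zero => simp [solidSimplex, hr, volume_pi]
  | succ k ih =>
    have h := lintegral_solidSimplex_succ k r (G := fun _ => 1) measurable_const
    simp only [setLIntegral_one, one_mul] at h
    rw [h, setLIntegral_congr_fun measurableSet_Icc fun t ht => ih (sub_nonneg.2 ht.2),
      ← ofReal_integral_eq_lintegral_ofReal]
    · rw [integral_Icc_eq_integral_Ioc, ← intervalIntegral.integral_of_le hr,
        intervalIntegral.integral_div, intervalIntegral.integral_comp_sub_left fun u => u ^ k]
      simp only [sub_self, sub_zero, integral_pow, Nat.factorial_succ, zero_pow k.succ_ne_zero]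
      push_cast
      field_simp
    · exact Continuous.integrableOn_Icc (by fun_prop)
    · exact ae_restrict_of_forall_mem measurableSet_Icc fun t ht =>
        div_nonneg (pow_nonneg (sub_nonneg.2 ht.2) k) (Nat.cast_nonneg _)

theorem integral_solidSimplex_succ (k : ℕ) (r : ℝ) {g : ℝ → ℝ} (hg : Measurable g)
    (hg0 : ∀ t ∈ Icc 0 r, 0 ≤ g t) :
    ∫ y in solidSimplex (k + 1) r, g (y 0) = ∫ t in Icc 0 r, g t * ((r - t) ^ k / k.factorial) := by
  rw [integral_eq_lintegral_of_nonneg_ae, integral_eq_lintegral_of_nonneg_ae,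
    lintegral_solidSimplex_succ k r hg.ennreal_ofReal]
  · congr 1
    refine setLIntegral_congr_fun measurableSet_Icc fun t ht => ?_
    rw [volume_solidSimplex k (sub_nonneg.2 ht.2), ← ENNReal.ofReal_mul (hg0 t ht)]
  · exact ae_restrict_of_forall_mem measurableSet_Icc fun t ht =>
      mul_nonneg (hg0 t ht) (div_nonneg (pow_nonneg (sub_nonneg.2 ht.2) k) (Nat.cast_nonneg _))
  · exact (hg.mul (by fun_prop)).aestronglyMeasurable
  · exact ae_restrict_of_forall_mem (measurableSet_solidSimplex _ _) fun y hy =>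
      hg0 _ (mem_Icc_of_mem_solidSimplex hy 0)
  · exact (hg.comp (measurable_pi_apply 0)).aestronglyMeasurable

theorem simplexIntegral_comp_apply_zero (k : ℕ) (f : ℝ → ℝ) :
    simplexIntegral (k + 2) (fun x => f (x 0)) =
      (k + 1).factorial * ∫ y in solidSimplex (k + 1) 1, f (y 0) :=
  rfl

theorem natCast_mul_simplexIntegral_negMulLog {n : ℕ} (hn : 1 ≤ n) :
    n * simplexIntegral n (fun x => negMulLog (x ⟨0, hn⟩)) = harmC n := by
  obtain _ | _ | k := n
  · omega
  · simp [simplexIntegral, harmC]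
  · rw [show (⟨0, hn⟩ : Fin (k + 2)) = 0 from rfl, simplexIntegral_comp_apply_zero,
      integral_solidSimplex_succ k 1 continuous_negMulLog.measurable
        fun t ht => negMulLog_nonneg ht.1 ht.2,
      integral_Icc_eq_integral_Ioc, ← intervalIntegral.integral_of_le zero_le_one]
    simp_rw [mul_div_assoc']
    rw [intervalIntegral.integral_div, integral_negMulLog_mul_one_sub_pow,
      harmC_eq_harmonic_sub_one hn, harmonic_succ (k + 1), Nat.factorial_succ]
    push_cast
    field_simp
    ring

theorem eta_eq_negMulLog : eta = negMulLog :=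
  funext fun y => (neg_mul y (log y)).symm

/-- −n ∫_{Δ_n} x₁ ln x₁ dx = C_n; equivalently F(1,0,…,0) = 0. -/
theorem simplex_integral_x_log_x (n : ℕ) (hn : 1 ≤ n) :
    -((n : ℝ) * simplexIntegral n (fun x => x ⟨0, hn⟩ * Real.log (x ⟨0, hn⟩))) = harmC n ∧
    subF n (fun i => if i = ⟨0, hn⟩ then 1 else 0) = 0 := by
  have hneg : simplexIntegral n (fun x => x ⟨0, hn⟩ * log (x ⟨0, hn⟩)) =
      -simplexIntegral n (fun x => negMulLog (x ⟨0, hn⟩)) := by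
    simp only [simplexIntegral, negMulLog, neg_mul, integral_neg, mul_neg, neg_neg]
  have hdot : ∀ x : Fin n → ℝ, ∑ i, (if i = ⟨0, hn⟩ then 1 else 0) * x i = x ⟨0, hn⟩ := by
    simp [ite_mul]
  constructor
  · rw [hneg, mul_neg, neg_neg, natCast_mul_simplexIntegral_negMulLog]
  · simp only [subF, hdot, eta_eq_negMulLog, natCast_mul_simplexIntegral_negMulLog, sub_self]
end

section
/- For every n ≥ 2, the simplex integral identity −n ∫_{Δ_n} (1 + ln x_1)(1 − n x_1) dx = n − 1 holds, where x_1 denotes the first coordinate on the simplex. (This computes the derivative at λ = 0 of λ ↦ F(1−(n−1)λ, λ, …, λ).) -/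
open MeasureTheory Matrix
open scoped ComplexOrder

/-!
Integrating out all coordinates but the first, the uniform measure on `Δ_n` has marginal density
`(n - 1) (1 - t)^(n - 2)` in `x₁`: by Cavalieri's principle, the slice `{y₀ = t}` of the corner
simplex `{y ≥ 0, ∑ y ≤ 1} ⊆ ℝ^(n-1)` is a corner simplex of side `1 - t`, of volume
`(1 - t)^(n - 2) / (n - 2)!`. The remaining integral `∫₀¹ (1 + ln t)(1 - n t)(1 - t)^(n - 2) dt`
equals `-1/n`, since `t ln t (1 - t)^(n-1) + (1 - t)^(n-1) - (n - 1)/n (1 - t)^n` is an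
antiderivative of the integrand.
-/

open Set

theorem map_eval_zero_restrict_eq_withDensity {k : ℕ} {S : Set (Fin (k + 1) → ℝ)}
    (hS : MeasurableSet S) :
    (volume.restrict S).map (fun y => y 0) =
      volume.withDensity (fun t => volume {z : Fin k → ℝ | Fin.cons t z ∈ S}) := by
  ext A hA
  have he := (volume_preserving_piFinSuccAbove (fun _ : Fin (k + 1) => ℝ) 0).symm
  have hAS : MeasurableSet ((fun y : Fin (k + 1) → ℝ => y 0) ⁻¹' A ∩ S) :=
    (measurable_pi_apply 0 hA).inter hS
  rw [Measure.map_apply (measurable_pi_apply 0) hA,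
    Measure.restrict_apply (measurable_pi_apply 0 hA),
    withDensity_apply _ hA, ← he.measure_preimage hAS.nullMeasurableSet, Measure.volume_eq_prod,
    Measure.prod_apply (he.measurable hAS), ← lintegral_indicator hA]
  congr 1 with t
  by_cases ht : t ∈ A <;>
    simp [ht, preimage, MeasurableEquiv.piFinSuccAbove_symm_apply, Fin.insertNthEquiv]

def cornerSimplex (m : ℕ) (c : ℝ) : Set (Fin m → ℝ) := {y | (∀ i, 0 ≤ y i) ∧ ∑ i, y i ≤ c}

theorem measurableSet_cornerSimplex (m : ℕ) (c : ℝ) : MeasurableSet (cornerSimplex m c) := by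
  unfold cornerSimplex
  measurability

theorem cornerSimplex_eq_empty {m : ℕ} {c : ℝ} (hc : c < 0) : cornerSimplex m c = ∅ :=
  eq_empty_of_forall_notMem fun _ ⟨hy, hsum⟩ =>
    (hsum.trans_lt hc).not_ge (Finset.sum_nonneg fun i _ => hy i)

theorem cons_mem_cornerSimplex {m : ℕ} {c t : ℝ} {z : Fin m → ℝ} :
    Fin.cons t z ∈ cornerSimplex (m + 1) c ↔ 0 ≤ t ∧ z ∈ cornerSimplex m (c - t) := by
  simp [cornerSimplex, Fin.forall_fin_succ, Fin.sum_cons, le_sub_iff_add_le', and_assoc]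

theorem cons_preimage_cornerSimplex (m : ℕ) (c t : ℝ) :
    {z : Fin m → ℝ | Fin.cons t z ∈ cornerSimplex (m + 1) c} =
      if t ∈ Icc 0 c then cornerSimplex m (c - t) else ∅ := by
  simp only [cons_mem_cornerSimplex]
  split_ifs with ht
  · simp [ht.1]
  · rcases le_or_gt 0 t with h0 | h0
    · simp [h0, cornerSimplex_eq_empty (sub_neg.2 (lt_of_not_ge fun h => ht ⟨h0, h⟩))]
    · simp [h0.not_ge]

theorem volume_cons_preimage_cornerSimplex (m : ℕ) (c t : ℝ) :
    volume {z : Fin m → ℝ | Fin.cons t z ∈ cornerSimplex (m + 1) c} =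
      (Icc 0 c).indicator (fun t => volume (cornerSimplex m (c - t))) t := by
  rw [cons_preimage_cornerSimplex, indicator_apply, apply_ite volume, measure_empty]

theorem integral_sub_pow_div_factorial (m : ℕ) (c : ℝ) :
    ∫ t in (0 : ℝ)..c, (c - t) ^ m / m.factorial = c ^ (m + 1) / (m + 1).factorial := by
  rw [intervalIntegral.integral_div, intervalIntegral.integral_comp_sub_left (fun x => x ^ m)]
  simp [integral_pow, Nat.factorial_succ]
  field_simp

theorem volume_cornerSimplex (m : ℕ) {c : ℝ} (hc : 0 ≤ c) :
    volume (cornerSimplex m c) = ENNReal.ofReal (c ^ m / m.factorial) := by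
  induction m generalizing c with
  | zero => simp [cornerSimplex, hc, volume_pi]
  | succ m ih =>
    have hS := measurableSet_cornerSimplex (m + 1) c
    calc volume (cornerSimplex (m + 1) c)
        = (volume.restrict (cornerSimplex (m + 1) c)).map (fun y => y 0) univ := by
          rw [Measure.map_apply (measurable_pi_apply 0) MeasurableSet.univ, preimage_univ,
            Measure.restrict_apply_univ]
      _ = ∫⁻ t in Icc 0 c, volume (cornerSimplex m (c - t)) := by
          rw [map_eval_zero_restrict_eq_withDensity hS, withDensity_apply _ MeasurableSet.univ,
            Measure.restrict_univ]
          simp_rw [volume_cons_preimage_cornerSimplex]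
          exact lintegral_indicator measurableSet_Icc _
      _ = ∫⁻ t in Icc 0 c, ENNReal.ofReal ((c - t) ^ m / m.factorial) :=
          setLIntegral_congr_fun measurableSet_Icc fun t ht => ih (sub_nonneg.2 ht.2)
      _ = ENNReal.ofReal (∫ t in Icc 0 c, (c - t) ^ m / m.factorial) := by
          refine (ofReal_integral_eq_lintegral_ofReal ?_ ?_).symm
          · exact (Continuous.integrableOn_Icc (by fun_prop))
          · refine (ae_restrict_iff' measurableSet_Icc).2 (ae_of_all _ fun t ht => ?_)
            have := sub_nonneg.2 ht.2
            positivity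
      _ = ENNReal.ofReal (c ^ (m + 1) / (m + 1).factorial) := by
          rw [integral_Icc_eq_integral_Ioc, ← intervalIntegral.integral_of_le hc,
            integral_sub_pow_div_factorial]

theorem map_eval_zero_restrict_cornerSimplex (m : ℕ) (c : ℝ) :
    (volume.restrict (cornerSimplex (m + 1) c)).map (fun y => y 0) =
      (volume.restrict (Icc 0 c)).withDensity
        (fun t => ENNReal.ofReal ((c - t) ^ m / m.factorial)) := by
  rw [map_eval_zero_restrict_eq_withDensity (measurableSet_cornerSimplex _ _),
    ← withDensity_indicator measurableSet_Icc]
  simp_rw [volume_cons_preimage_cornerSimplex]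
  congr 1
  exact indicator_congr fun t ht => volume_cornerSimplex m (sub_nonneg.2 ht.2)

theorem setIntegral_cornerSimplex_comp_eval_zero (m : ℕ) (c : ℝ) {g : ℝ → ℝ} (hg : Measurable g) :
    ∫ y in cornerSimplex (m + 1) c, g (y 0) =
      (∫ t in Icc 0 c, (c - t) ^ m * g t) / m.factorial := by
  rw [← integral_map (measurable_pi_apply 0).aemeasurable hg.aestronglyMeasurable,
    map_eval_zero_restrict_cornerSimplex, integral_withDensity_eq_integral_toReal_smul
      (by fun_prop) (ae_of_all _ fun _ => ENNReal.ofReal_lt_top), ← integral_div]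
  refine setIntegral_congr_fun measurableSet_Icc fun t ht => ?_
  have := sub_nonneg.2 ht.2
  rw [ENNReal.toReal_ofReal (by positivity), smul_eq_mul, div_mul_eq_mul_div]

theorem integral_sub_pow_mul_one_add_log (k : ℕ) :
    ∫ t in (0 : ℝ)..1, (1 - t) ^ k * ((1 + Real.log t) * (1 - (k + 2) * t)) = -1 / (k + 2) := by
  set F : ℝ → ℝ := fun t => t * Real.log t * (1 - t) ^ (k + 1) + (1 - t) ^ (k + 1)
    - (k + 1) / (k + 2) * (1 - t) ^ (k + 2)
  have hF : ∀ t ∈ Ioo (0 : ℝ) 1,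
      HasDerivAt F ((1 - t) ^ k * ((1 + Real.log t) * (1 - (k + 2) * t))) t := by
    intro t ht
    have hsub : HasDerivAt (fun t : ℝ => 1 - t) (-1) t := by
      simpa using (hasDerivAt_id t).const_sub 1
    have h1 := hsub.fun_pow (k + 1)
    have h2 := hsub.fun_pow (k + 2)
    refine ((((Real.hasDerivAt_mul_log ht.1.ne').fun_mul h1).fun_add h1).fun_sub
      (h2.const_mul ((k + 1) / (k + 2) : ℝ))).congr_deriv ?_
    rw [Nat.add_sub_cancel, show k + 2 - 1 = k + 1 by omega]
    push_cast
    field_simp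
    ring
  have hcont : Continuous F := by
    have := Real.continuous_mul_log
    fun_prop
  rw [intervalIntegral.integral_eq_sub_of_hasDerivAt_of_le zero_le_one hcont.continuousOn hF]
  · simp only [F]
    norm_num
    field_simp
    ring
  · have hpoly : Continuous fun t : ℝ => (1 - t) ^ k * (1 - (k + 2) * t) := by fun_prop
    convert (hpoly.intervalIntegrable 0 1).add
      (intervalIntegral.intervalIntegrable_log'.mul_continuousOn hpoly.continuousOn) using 2
    ring

/-- the simplex integral identity −n ∫_{Δ_n} (1 + ln x₁)(1 − n x₁) dx = n − 1. -/
theorem simplex_integral_derivative_identity (n : ℕ) (hn : 2 ≤ n) :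
    -((n : ℝ) * simplexIntegral n
        (fun x => (1 + Real.log (x ⟨0, by omega⟩)) * (1 - (n : ℝ) * x ⟨0, by omega⟩)))
      = (n : ℝ) - 1 := by
  obtain ⟨k, rfl⟩ : ∃ k, n = k + 2 := ⟨n - 2, by omega⟩
  have hintegral : ∫ y in cornerSimplex (k + 1) 1, (1 + Real.log (y 0)) * (1 - (k + 2) * y 0) =
      -1 / (k + 2) / k.factorial := by
    rw [setIntegral_cornerSimplex_comp_eval_zero k 1
        (g := fun t => (1 + Real.log t) * (1 - (k + 2) * t)) (by fun_prop),
      integral_Icc_eq_integral_Ioc, ← intervalIntegral.integral_of_le zero_le_one,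
      integral_sub_pow_mul_one_add_log]
  unfold simplexIntegral
  simp only [Nat.add_one_sub_one, Fin.zero_eta, Fin.val_zero, Nat.zero_lt_succ, dite_true]
  push_cast
  rw [cornerSimplex] at hintegral
  rw [hintegral, Nat.factorial_succ]
  push_cast
  field_simp
  ring
end

section
/- Guessing-probability bound for two pure states: let p ∈ (0,1), set p_1 = p, p_2 = 1 − p, let θ ∈ (0,π), and define λ_± = (1 ± √(1 − 4 p_1 p_2 sin²θ))/2. Then F(p_1, p_2) − F(λ_+, λ_−) ≤ −ln( (1 + √(1 − 4 p_1 p_2 cos²θ))/2 ). (The left side is the conditional subentropy Q(X|B) of the classical-quantum state built from two pure states with overlap cos θ and probabilities p_1, p_2; the right side is its min-conditional entropy H_min(X|B) = −ln p_guess.) -/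
open MeasureTheory Matrix
open scoped ComplexOrder

/-!
Write `d = |p₁ - p₂|` for the bias of a two-point distribution. By the closed form of `F`, the
function `d ↦ F + d² / 4` has derivative `p₁ p₂ (log (p₁ / p₂) - 2 d) / d² ≥ 0`, so it is
nondecreasing on `[0, 1]`. The eigenvalues `λ±` have bias `μ = √(1 - 4 p₁ p₂ sin² θ) ≥ d`, hence
`F(p₁, p₂) - F(λ₊, λ₋) ≤ (μ² - d²) / 4 = p₁ p₂ cos² θ = (1 - ν²) / 4`
with `ν = √(1 - 4 p₁ p₂ cos² θ)`, and `(1 - ν²) / 4 ≤ (1 - ν) / 2 ≤ -log ((1 + ν) / 2)`.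
-/

open Real Set

lemma continuous_eta : Continuous eta :=
  continuous_mul_log.neg

noncomputable def etaPrimitive (y : ℝ) : ℝ := y ^ 2 / 4 - y ^ 2 * log y / 2

lemma hasDerivAt_etaPrimitive {y : ℝ} (hy : y ≠ 0) : HasDerivAt etaPrimitive (eta y) y := by
  have hsq : HasDerivAt (fun z : ℝ => z ^ 2) (2 * y) y := by simpa using hasDerivAt_pow 2 y
  refine ((hsq.div_const 4).sub ((hsq.mul (hasDerivAt_log hy)).div_const 2)).congr_deriv ?_
  rw [eta]
  field_simp
  ring

lemma integral_eta {a b : ℝ} (ha : 0 < a) (hb : 0 < b) :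
    ∫ y in a..b, eta y = etaPrimitive b - etaPrimitive a :=
  intervalIntegral.integral_eq_sub_of_hasDerivAt
    (fun _ hy => hasDerivAt_etaPrimitive (lt_of_lt_of_le (lt_min ha hb) hy.1).ne')
    (continuous_eta.intervalIntegrable a b)

lemma two_mul_le_log_sub_log {x : ℝ} (hx0 : 0 ≤ x) (hx1 : x < 1) :
    2 * x ≤ log (1 + x) - log (1 - x) := by
  have hseries := hasSum_log_sub_log_of_abs_lt_one (abs_lt.2 ⟨by linarith, hx1⟩)
  simpa using le_hasSum hseries 0 fun _ _ => by positivity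

lemma one_sub_sq_div_four_le_neg_log {x : ℝ} (hx : -1 < x) :
    (1 - x ^ 2) / 4 ≤ -log ((1 + x) / 2) := by
  have := log_le_sub_one_of_pos (show 0 < (1 + x) / 2 by linarith)
  nlinarith [sq_nonneg (1 - x)]

lemma subF_two_eq_integral (u v : ℝ) :
    subF 2 ![u, v] = 2 * (∫ t in (0 : ℝ)..1, eta (v + (u - v) * t)) - 1 / 2 := by
  have hset : {y : Fin 1 → ℝ | (∀ i, 0 ≤ y i) ∧ ∑ i, y i ≤ 1}
      = MeasurableEquiv.funUnique (Fin 1) ℝ ⁻¹' Icc 0 1 := by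
    ext y
    simp [MeasurableEquiv.funUnique, Fin.forall_fin_one]
  have hchange := (volume_preserving_funUnique (Fin 1) ℝ).setIntegral_preimage_emb
    (MeasurableEquiv.funUnique (Fin 1) ℝ).measurableEmbedding
    (fun t => eta (v + (u - v) * t)) (Icc 0 1)
  rw [subF, simplexIntegral, hset, intervalIntegral.integral_of_le zero_le_one,
    ← integral_Icc_eq_integral_Ioc, ← hchange]
  norm_num [harmC]
  refine setIntegral_congr_fun ?_ fun y _ => ?_
  · exact (MeasurableEquiv.funUnique (Fin 1) ℝ).measurable measurableSet_Icc
  · change eta (u * y 0 + v * (1 - ∑ j : Fin 1, y j)) = _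
    rw [Fin.sum_univ_one]
    ring_nf

lemma subF_two_comm (u v : ℝ) : subF 2 ![u, v] = subF 2 ![v, u] := by
  have hflip := intervalIntegral.integral_comp_sub_left
    (fun t => eta (v + (u - v) * t)) (a := 0) (b := 1) 1
  norm_num at hflip
  rw [subF_two_eq_integral, subF_two_eq_integral, ← hflip]
  congr 3 with t
  ring_nf

noncomputable def binarySubF (d : ℝ) : ℝ := subF 2 ![(1 + d) / 2, (1 - d) / 2]

lemma binarySubF_neg (d : ℝ) : binarySubF (-d) = binarySubF d := by
  rw [binarySubF, binarySubF, subF_two_comm, ← sub_eq_add_neg, sub_neg_eq_add]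

lemma subF_two_eq_binarySubF_abs {u v : ℝ} (h : u + v = 1) :
    subF 2 ![u, v] = binarySubF |u - v| := by
  have hbias : subF 2 ![u, v] = binarySubF (u - v) := by
    rw [binarySubF, show (1 + (u - v)) / 2 = u by linarith, show (1 - (u - v)) / 2 = v by linarith]
  rcases abs_choice (u - v) with habs | habs <;> rw [habs, hbias]
  rw [binarySubF_neg]

lemma binarySubF_eq_integral (d : ℝ) :
    binarySubF d = 2 * (∫ t in (0 : ℝ)..1, eta ((1 - d) / 2 + d * t)) - 1 / 2 := by
  rw [binarySubF, subF_two_eq_integral, show (1 + d) / 2 - (1 - d) / 2 = d by ring]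

lemma continuous_binarySubF : Continuous binarySubF := by
  have hf : Continuous (Function.uncurry fun d t : ℝ => eta ((1 - d) / 2 + d * t)) :=
    continuous_eta.comp (f := fun x : ℝ × ℝ => (1 - x.1) / 2 + x.1 * x.2) (by fun_prop)
  exact (((intervalIntegral.continuous_parametric_intervalIntegral_of_continuous' hf 0 1).const_mul
    2).sub continuous_const).congr fun d => (binarySubF_eq_integral d).symm

lemma binarySubF_eq_div {d : ℝ} (hd : 0 < d) (hd1 : d < 1) :
    binarySubF d = 2 * (etaPrimitive ((1 + d) / 2) - etaPrimitive ((1 - d) / 2)) / d - 1 / 2 := by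
  rw [binarySubF_eq_integral, intervalIntegral.integral_comp_add_mul _ hd.ne',
    integral_eta (by linarith) (by linarith), mul_zero, add_zero,
    show (1 - d) / 2 + d * 1 = (1 + d) / 2 by ring, smul_eq_mul]
  ring

lemma hasDerivAt_binarySubF_add_sq {d : ℝ} (hd : 0 < d) (hd1 : d < 1) :
    HasDerivAt (fun x => binarySubF x + x ^ 2 / 4)
      ((1 + d) / 2 * ((1 - d) / 2) * (log (1 + d) - log (1 - d) - 2 * d) / d ^ 2) d := by
  have hclosed : (fun x => binarySubF x + x ^ 2 / 4) =ᶠ[nhds d] fun x =>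
      2 * (etaPrimitive ((1 + x) / 2) - etaPrimitive ((1 - x) / 2)) / x - 1 / 2 + x ^ 2 / 4 := by
    filter_upwards [Ioo_mem_nhds hd hd1] with x hx
    rw [binarySubF_eq_div hx.1 hx.2]
  have hplus : HasDerivAt (fun x : ℝ => (1 + x) / 2) (1 / 2) d := by
    simpa using ((hasDerivAt_id d).const_add 1).div_const 2
  have hminus : HasDerivAt (fun x : ℝ => (1 - x) / 2) (-(1 / 2)) d := by
    simpa [neg_div] using ((hasDerivAt_id d).const_sub 1).div_const 2
  have hsq : HasDerivAt (fun x : ℝ => x ^ 2) (2 * d) d := by simpa using hasDerivAt_pow 2 d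
  have hP := ((hasDerivAt_etaPrimitive (by linarith)).comp d hplus).sub
    ((hasDerivAt_etaPrimitive (by linarith)).comp d hminus)
  refine ((((hP.const_mul 2).div (hasDerivAt_id d) hd.ne').sub_const (1 / 2)).add
    (hsq.div_const 4)).congr_of_eventuallyEq hclosed |>.congr_deriv ?_
  simp only [Pi.sub_apply, Function.comp_apply, eta, etaPrimitive, id]
  rw [log_div (by linarith) two_ne_zero, log_div (by linarith) two_ne_zero]
  field_simp
  ring

lemma monotoneOn_binarySubF_add_sq :
    MonotoneOn (fun d => binarySubF d + d ^ 2 / 4) (Icc 0 1) := by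
  refine monotoneOn_of_deriv_nonneg (convex_Icc 0 1)
    (continuous_binarySubF.add (by fun_prop)).continuousOn ?_ ?_ <;> rw [interior_Icc]
  · exact fun d hd =>
      (hasDerivAt_binarySubF_add_sq hd.1 hd.2).differentiableAt.differentiableWithinAt
  · intro d hd
    rw [(hasDerivAt_binarySubF_add_sq hd.1 hd.2).deriv]
    have hu : 0 < (1 + d) / 2 := by linarith [hd.1]
    have hv : 0 < (1 - d) / 2 := by linarith [hd.2]
    have hgap : 0 ≤ log (1 + d) - log (1 - d) - 2 * d := by
      linarith [two_mul_le_log_sub_log hd.1.le hd.2]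
    positivity

theorem conditional_subentropy_le_min_conditional_entropy_two_pure_general
    (p : ℝ) (hp0 : 0 < p) (hp1 : p < 1) (θ : ℝ) :
    subF 2 ![p, 1 - p] -
      subF 2 ![(1 + Real.sqrt (1 - 4 * p * (1 - p) * Real.sin θ ^ 2)) / 2,
               (1 - Real.sqrt (1 - 4 * p * (1 - p) * Real.sin θ ^ 2)) / 2]
      ≤ -Real.log ((1 + Real.sqrt (1 - 4 * p * (1 - p) * Real.cos θ ^ 2)) / 2) := by
  set q := 4 * p * (1 - p)
  have hq0 : 0 ≤ q := mul_nonneg (by positivity) (by linarith)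
  have hq1 : q ≤ 1 := by nlinarith [sq_nonneg (2 * p - 1)]
  have hqs : q * sin θ ^ 2 ≤ q := mul_le_of_le_one_right hq0 (sin_sq_le_one θ)
  have hqc : q * cos θ ^ 2 ≤ q := mul_le_of_le_one_right hq0 (cos_sq_le_one θ)
  set μ := √(1 - q * sin θ ^ 2)
  set ν := √(1 - q * cos θ ^ 2)
  set d := |p - (1 - p)|
  have hμ : μ ^ 2 = 1 - q * sin θ ^ 2 := sq_sqrt (by linarith)
  have hν : ν ^ 2 = 1 - q * cos θ ^ 2 := sq_sqrt (by linarith)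
  have hd : d ^ 2 = 1 - q := by rw [sq_abs]; ring
  have hdμ : d ≤ μ := (le_sqrt (abs_nonneg _) (by linarith)).2 (by linarith)
  have hμ1 : μ ≤ 1 := sqrt_le_one.2 (by linarith [mul_nonneg hq0 (sq_nonneg (sin θ))])
  have hmono := monotoneOn_binarySubF_add_sq ⟨abs_nonneg _, hdμ.trans hμ1⟩
    ⟨(abs_nonneg _).trans hdμ, hμ1⟩ hdμ
  change _ - binarySubF μ ≤ _
  calc subF 2 ![p, 1 - p] - binarySubF μ ≤ (μ ^ 2 - d ^ 2) / 4 := by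
        rw [subF_two_eq_binarySubF_abs (by ring)]
        linarith
    _ = (1 - ν ^ 2) / 4 := by
        rw [hμ, hν, hd]
        linear_combination (-q / 4) * sin_sq_add_cos_sq θ
    _ ≤ -log ((1 + ν) / 2) := one_sub_sq_div_four_le_neg_log
        (by linarith [sqrt_nonneg (1 - q * cos θ ^ 2)])

/-- guessing-probability bound for two pure states:
Q(X|B) = F(p₁,p₂) − F(λ₊,λ₋) ≤ −ln p_guess = H_min(X|B). -/
theorem conditional_subentropy_le_min_conditional_entropy_two_pure
    (p : ℝ) (hp0 : 0 < p) (hp1 : p < 1) (θ : ℝ) (hθ0 : 0 < θ) (hθπ : θ < Real.pi) :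
    subF 2 ![p, 1 - p] -
      subF 2 ![(1 + Real.sqrt (1 - 4 * p * (1 - p) * Real.sin θ ^ 2)) / 2,
               (1 - Real.sqrt (1 - 4 * p * (1 - p) * Real.sin θ ^ 2)) / 2]
      ≤ -Real.log ((1 + Real.sqrt (1 - 4 * p * (1 - p) * Real.cos θ ^ 2)) / 2) :=
  conditional_subentropy_le_min_conditional_entropy_two_pure_general p hp0 hp1 θ
end
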